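/- Tent space duality pairing inequality: Let α > 0 and p, q ∈ (1,∞), and let p′, q′ denote the Hölder conjugates of p and q. Then for all measurable functions f, g on X⁺, ∬_{X⁺} |f(y,t)| |g(y,t)| dμ(y) dt/t ≤ ‖A_q^α(f)‖_{L^p(X)} ‖A_{q′}^α(g)‖_{L^{p′}(X)}. -/

import Mathlib

open MeasureTheory Metric Set
open scoped ENNReal NNReal

noncomputable section

variable {X : Type*}

/-- The measure `dμ(y) dt/t` on `X⁺ = X × (0,∞)`, modelled on `X × ℝ`
(supported on `{t > 0}`). -/
def upHalf [MeasurableSpace X] (μ : Measure X) : Measure (X × ℝ) :=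
  μ.prod ((volume.restrict (Set.Ioi (0:ℝ))).withDensity fun t => ENNReal.ofReal t⁻¹)

/-- The measure `dμ(y) dt` on `X⁺` (supported on `{t > 0}`). -/
def upHalf' [MeasurableSpace X] (μ : Measure X) : Measure (X × ℝ) :=
  μ.prod (volume.restrict (Set.Ioi (0:ℝ)))

/-- Cone of aperture `α` with vertex `x`. -/
def coneAt [PseudoMetricSpace X] (α : ℝ) (x : X) : Set (X × ℝ) :=
  {p | dist p.1 x < α * p.2}

/-- Tent of aperture `α` over `O ⊆ X`: the complement in `X⁺` of the union of the
cones of aperture `α` with vertices outside `O`. -/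
def tentOver [PseudoMetricSpace X] (α : ℝ) (O : Set X) : Set (X × ℝ) :=
  {p | 0 < p.2 ∧ ∀ x ∉ O, α * p.2 ≤ dist p.1 x}

/-- The `α`-shadow of `C ⊆ X⁺`: points whose cone meets `C`. -/
def shadowOf [PseudoMetricSpace X] (α : ℝ) (C : Set (X × ℝ)) : Set X :=
  {x | ∃ p ∈ C, p ∈ coneAt α x}

/-- The operator `A_q^α`:
`A_q^α(f)(x) = (∬_{Γ^α(x)} |f(y,t)|^q dμ(y)/V(y,αt) dt/t)^{1/q}`. -/
def Afun [PseudoMetricSpace X] [MeasurableSpace X] (μ : Measure X) (q α : ℝ)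
    (f : X × ℝ → ℝ) (x : X) : ℝ≥0∞ :=
  (∫⁻ p in coneAt α x,
      ENNReal.ofReal (|f p| ^ q) / μ (ball p.1 (α * p.2)) ∂upHalf μ) ^ (1/q)

/-- The truncated operator `A_q^α(·|h)`, integrating over the truncated cone
`Γ_h^α(x)`. -/
def AfunT [PseudoMetricSpace X] [MeasurableSpace X] (μ : Measure X) (q α h : ℝ)
    (f : X × ℝ → ℝ) (x : X) : ℝ≥0∞ :=
  (∫⁻ p in coneAt α x ∩ {p : X × ℝ | p.2 < h},
      ENNReal.ofReal (|f p| ^ q) / μ (ball p.1 (α * p.2)) ∂upHalf μ) ^ (1/q)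

/-- The Carleson operator `C_q^α`:
`C_q^α(f)(x) = sup_{B ∋ x} (μ(B)⁻¹ ∬_{T^α(B)} |f(y,t)|^q dμ(y) dt/t)^{1/q}`,
the supremum being over open balls containing `x`. -/
def Cfun [PseudoMetricSpace X] [MeasurableSpace X] (μ : Measure X) (q α : ℝ)
    (f : X × ℝ → ℝ) (x : X) : ℝ≥0∞ :=
  ⨆ (z : X) (ρ : ℝ) (_ : 0 < ρ ∧ x ∈ ball z ρ),
    ((μ (ball z ρ))⁻¹ *
      ∫⁻ p in tentOver α (ball z ρ), ENNReal.ofReal (|f p| ^ q) ∂upHalf μ) ^ (1/q)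

/-- The tent space quasi-norm `‖f‖_{T^{p,q,α}} = ‖A_q^α(f)‖_{L^p(X)}`. -/
def tNorm [PseudoMetricSpace X] [MeasurableSpace X] (μ : Measure X) (p q α : ℝ)
    (f : X × ℝ → ℝ) : ℝ≥0∞ :=
  (∫⁻ x, Afun μ q α f x ^ p ∂μ) ^ (1/p)

/-- The uncentred Hardy–Littlewood maximal operator applied to an
`ℝ≥0∞`-valued function. -/
def maxFun [PseudoMetricSpace X] [MeasurableSpace X] (μ : Measure X)
    (g : X → ℝ≥0∞) (x : X) : ℝ≥0∞ :=
  ⨆ (z : X) (ρ : ℝ) (_ : 0 < ρ ∧ x ∈ ball z ρ),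
    (μ (ball z ρ))⁻¹ * ∫⁻ y in ball z ρ, g y ∂μ

/-- `μ` is doubling: `V(x,2r) ≤ C V(x,r)` for all `x`, `r > 0`. -/
def DoublingMeas [PseudoMetricSpace X] [MeasurableSpace X] (μ : Measure X) : Prop :=
  ∃ C > (0:ℝ), ∀ (x : X) (r : ℝ), 0 < r →
    μ (ball x (2 * r)) ≤ ENNReal.ofReal C * μ (ball x r)

/-!
Since `V(y,αt) = μ {x | (y,t) ∈ Γ^α(x)}`, Fubini turns `∬ H(y,t) V(y,αt) dμ(y) dt/t` into
`∫_X ∬_{Γ^α(x)} H`. Writing `|f||g| = (|f|^q/V)^{1/q} (|g|^{q'}/V)^{1/q'} V`, Hölder's inequality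
in each cone bounds the inner integral by `A_q^α f(x) · A_{q'}^α g(x)`, and Hölder's inequality
on `X` finishes. Positivity and finiteness of ball volumes make the splitting legitimate; they
also force `X` to be separable (disjoint balls of a fixed radius inside a ball all carry positive
mass, so there are countably many), which is what makes the cones jointly measurable.
-/

namespace Metric

lemma exists_maximal_isSeparated (X : Type*) [PseudoEMetricSpace X] (ε : ℝ≥0∞) :
    ∃ N : Set X, Maximal (fun N ↦ N ⊆ univ ∧ IsSeparated ε N) N := by
  obtain ⟨N, hN⟩ := zorn_subset {N : Set X | IsSeparated ε N} fun c hc hchain ↦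
    ⟨⋃₀ c, hchain.pairwise_sUnion.2 hc, fun _ ↦ subset_sUnion_of_mem⟩
  exact ⟨N, by simpa using hN⟩

lemma IsSeparated.countable_of_measure_ball [PseudoMetricSpace X] [MeasurableSpace X]
    [OpensMeasurableSpace X] (μ : Measure X)
    (hpos : ∀ (x : X) (r : ℝ), 0 < r → 0 < μ (ball x r))
    (hfin : ∀ (x : X) (r : ℝ), 0 < r → μ (ball x r) < ∞)
    {ε : ℝ≥0} (hε : 0 < ε) {N : Set X} (hN : IsSeparated ε N) : N.Countable := by
  rcases N.eq_empty_or_nonempty with rfl | ⟨x₀, -⟩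
  · exact countable_empty
  rw [← inter_univ N, ← iUnion_ball_nat x₀, inter_iUnion]
  refine countable_iUnion fun n ↦ ?_
  let T := N ∩ ball x₀ n
  have hdisj : Pairwise fun i j : T ↦ Disjoint (ball (i : X) (ε / 2)) (ball j (ε / 2)) := by
    intro i j hij
    refine ball_disjoint_ball ?_
    have : (ε : ℝ≥0∞) < edist (i : X) j := hN i.2.1 j.2.1 (Subtype.coe_ne_coe.2 hij)
    rw [edist_dist, ENNReal.coe_lt_ofReal] at this
    linarith
  have hcover : (⋃ i : T, ball (i : X) (ε / 2)) ⊆ ball x₀ (n + ε) := by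
    refine iUnion_subset fun i y hy ↦ ?_
    have := dist_triangle y i x₀
    have := i.2.2
    rw [mem_ball] at *
    linarith
  have hcount := Measure.countable_meas_pos_of_disjoint_of_meas_iUnion_ne_top μ
    (fun _ ↦ measurableSet_ball) hdisj
    ((measure_mono hcover).trans_lt (hfin _ _ (by positivity))).ne
  exact countable_coe_iff.1 <| countable_univ_iff.1 <|
    hcount.mono fun i _ ↦ hpos _ _ (by positivity)

lemma secondCountableTopology_of_measure_ball [PseudoMetricSpace X] [MeasurableSpace X]
    [OpensMeasurableSpace X] (μ : Measure X)
    (hpos : ∀ (x : X) (r : ℝ), 0 < r → 0 < μ (ball x r))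
    (hfin : ∀ (x : X) (r : ℝ), 0 < r → μ (ball x r) < ∞) :
    SecondCountableTopology X := by
  refine secondCountable_of_almost_dense_set fun ε hε ↦ ?_
  obtain ⟨N, hN⟩ := exists_maximal_isSeparated X (ε.toNNReal : ℝ≥0∞)
  refine ⟨N, hN.prop.2.countable_of_measure_ball μ hpos hfin (by simpa using hε), fun x ↦ ?_⟩
  obtain ⟨y, hy, hxy⟩ := IsCover.of_maximal_isSeparated hN (mem_univ x)
  exact ⟨y, hy, by simpa [edist_dist, hε.le] using hxy⟩

end Metric

lemma ENNReal.mul_eq_rpow_div_mul_rpow_div_mul {p q : ℝ} (hpq : p.HolderConjugate q)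
    (a b : ℝ≥0∞) {c : ℝ≥0∞} (hc₀ : c ≠ 0) (hc : c ≠ ∞) :
    a * b = (a ^ p / c) ^ (1 / p) * (b ^ q / c) ^ (1 / q) * c := by
  have hroot : ∀ {r : ℝ}, 0 < r → ∀ x : ℝ≥0∞, (x ^ r / c) ^ (1 / r) = x * c⁻¹ ^ (1 / r) := by
    intro r hr x
    rw [ENNReal.div_rpow_of_nonneg _ _ (one_div_nonneg.2 hr.le), ← ENNReal.rpow_mul,
      mul_one_div_cancel hr.ne', ENNReal.rpow_one, div_eq_mul_inv, ENNReal.inv_rpow]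
  have hsplit : c⁻¹ ^ (1 / p) * c⁻¹ ^ (1 / q) * c = 1 := by
    rw [← ENNReal.rpow_add_of_nonneg _ _ hpq.one_div_nonneg hpq.symm.one_div_nonneg, one_div,
      one_div, hpq.inv_add_inv_eq_one, ENNReal.rpow_one, ENNReal.inv_mul_cancel hc₀ hc]
  rw [hroot hpq.pos, hroot hpq.symm.pos]
  calc a * b = a * b * (c⁻¹ ^ (1 / p) * c⁻¹ ^ (1 / q) * c) := by rw [hsplit, mul_one]
    _ = _ := by ring

section Cones

variable [PseudoMetricSpace X] (α : ℝ)

lemma setOf_mem_coneAt (p : X × ℝ) : {x | p ∈ coneAt α x} = ball p.1 (α * p.2) := by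
  ext x
  simp [coneAt, dist_comm]

variable [MeasurableSpace X] [OpensMeasurableSpace X]

lemma measurableSet_coneAt (x : X) : MeasurableSet (coneAt α x) :=
  measurableSet_lt (by fun_prop) (by fun_prop)

variable [SecondCountableTopology X]

lemma measurableSet_setOf_mem_coneAt :
    MeasurableSet {z : X × (X × ℝ) | z.2 ∈ coneAt α z.1} :=
  measurableSet_lt (f := fun z : X × (X × ℝ) ↦ dist z.2.1 z.1) (by fun_prop) (by fun_prop)

lemma measurable_measure_ball_mul (μ : Measure X) [SFinite μ] :
    Measurable fun p : X × ℝ ↦ μ (ball p.1 (α * p.2)) := by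
  simp_rw [← setOf_mem_coneAt]
  exact measurable_measure_prodMk_right (measurableSet_setOf_mem_coneAt α)

lemma measurable_indicator_coneAt {F : X × ℝ → ℝ≥0∞} (hF : Measurable F) :
    Measurable fun z : X × (X × ℝ) ↦ (coneAt α z.1).indicator F z.2 :=
  (hF.comp measurable_snd).indicator (measurableSet_setOf_mem_coneAt α)

variable {α} (ν : Measure (X × ℝ)) [SFinite ν]

lemma measurable_setLIntegral_coneAt {F : X × ℝ → ℝ≥0∞} (hF : Measurable F) :
    Measurable fun x ↦ ∫⁻ p in coneAt α x, F p ∂ν := by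
  simp_rw [← lintegral_indicator (measurableSet_coneAt α _)]
  exact (measurable_indicator_coneAt α hF).lintegral_prod_right'

lemma lintegral_setLIntegral_coneAt (μ : Measure X) [SFinite μ] {F : X × ℝ → ℝ≥0∞}
    (hF : Measurable F) :
    ∫⁻ x, ∫⁻ p in coneAt α x, F p ∂ν ∂μ = ∫⁻ p, F p * μ (ball p.1 (α * p.2)) ∂ν := by
  simp_rw [← lintegral_indicator (measurableSet_coneAt α _)]
  rw [lintegral_lintegral_swap (measurable_indicator_coneAt α hF).aemeasurable]
  refine lintegral_congr fun p ↦ ?_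
  rw [← setOf_mem_coneAt,
    ← lintegral_indicator_const ((setOf_mem_coneAt α p).symm ▸ measurableSet_ball)]
  rfl

end Cones

instance [MeasurableSpace X] (μ : Measure X) [SFinite μ] : SFinite (upHalf μ) := by
  unfold upHalf; infer_instance

lemma ae_upHalf_snd_pos [MeasurableSpace X] (μ : Measure X) :
    ∀ᵐ p ∂upHalf μ, 0 < p.2 :=
  Measure.quasiMeasurePreserving_snd.ae
    ((withDensity_absolutelyContinuous _ _).ae_le (ae_restrict_mem measurableSet_Ioi))

lemma measurable_Afun [PseudoMetricSpace X] [MeasurableSpace X] [OpensMeasurableSpace X]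
    [SecondCountableTopology X] (μ : Measure X) [SFinite μ] (q α : ℝ) {f : X × ℝ → ℝ}
    (hf : Measurable f) : Measurable (Afun μ q α f) := by
  refine (measurable_setLIntegral_coneAt _ ?_).pow_const _
  exact (hf.abs.pow_const q).ennreal_ofReal.div (measurable_measure_ball_mul α μ)

/-- **Tent space duality pairing inequality.** For `α > 0`, `p,q ∈ (1,∞)` with
Hölder conjugates `p' = p/(p-1)`, `q' = q/(q-1)`, and `f,g` measurable on `X⁺`,
`∬_{X⁺} |f||g| dμ dt/t ≤ ‖A_q^α(f)‖_{L^p(X)} ‖A_{q'}^α(g)‖_{L^{p'}(X)}`. -/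
theorem tent_pairing_inequality [MetricSpace X] [MeasurableSpace X] [BorelSpace X]
    (μ : Measure X) [SigmaFinite μ]
    (hpos : ∀ (x : X) (r : ℝ), 0 < r → 0 < μ (ball x r))
    (hfin : ∀ (x : X) (r : ℝ), 0 < r → μ (ball x r) < ∞)
    (α p q : ℝ) (hα : 0 < α) (hp : 1 < p) (hq : 1 < q)
    (f g : X × ℝ → ℝ) (hf : Measurable f) (hg : Measurable g) :
    ∫⁻ pt, ENNReal.ofReal (|f pt| * |g pt|) ∂upHalf μ
      ≤ tNorm μ p q α f * tNorm μ (p/(p-1)) (q/(q-1)) α g := by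
  have := Metric.secondCountableTopology_of_measure_ball μ hpos hfin
  set q' := q / (q - 1)
  have hqq' : q.HolderConjugate q' := .conjExponent hq
  set V : X × ℝ → ℝ≥0∞ := fun pt ↦ μ (ball pt.1 (α * pt.2))
  set F : X × ℝ → ℝ≥0∞ := fun pt ↦ ENNReal.ofReal (|f pt| ^ q) / V pt
  set G : X × ℝ → ℝ≥0∞ := fun pt ↦ ENNReal.ofReal (|g pt| ^ q') / V pt
  have hV : Measurable V := measurable_measure_ball_mul α μ
  have hF : Measurable F := (hf.abs.pow_const q).ennreal_ofReal.div hV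
  have hG : Measurable G := (hg.abs.pow_const q').ennreal_ofReal.div hV
  have hFG : Measurable fun pt ↦ F pt ^ (1 / q) * G pt ^ (1 / q') :=
    (hF.pow_const _).mul (hG.pow_const _)
  calc ∫⁻ pt, ENNReal.ofReal (|f pt| * |g pt|) ∂upHalf μ
      = ∫⁻ pt, F pt ^ (1 / q) * G pt ^ (1 / q') * V pt ∂upHalf μ := by
        refine lintegral_congr_ae ?_
        filter_upwards [ae_upHalf_snd_pos μ] with pt ht
        have hr : 0 < α * pt.2 := mul_pos hα ht
        rw [ENNReal.ofReal_mul (abs_nonneg _), ENNReal.mul_eq_rpow_div_mul_rpow_div_mul hqq' _ _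
          (hpos _ _ hr).ne' (hfin _ _ hr).ne,
          ENNReal.ofReal_rpow_of_nonneg (abs_nonneg _) hqq'.nonneg,
          ENNReal.ofReal_rpow_of_nonneg (abs_nonneg _) hqq'.symm.nonneg]
    _ = ∫⁻ x, ∫⁻ pt in coneAt α x, F pt ^ (1 / q) * G pt ^ (1 / q') ∂upHalf μ ∂μ :=
        (lintegral_setLIntegral_coneAt _ μ hFG).symm
    _ ≤ ∫⁻ x, Afun μ q α f x * Afun μ q' α g x ∂μ := by
        refine lintegral_mono fun x ↦ ENNReal.lintegral_mul_norm_pow_le hF.aemeasurable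
          hG.aemeasurable hqq'.one_div_nonneg hqq'.symm.one_div_nonneg ?_
        rw [one_div, one_div, hqq'.inv_add_inv_eq_one]
    _ ≤ tNorm μ p q α f * tNorm μ (p / (p - 1)) q' α g :=
        ENNReal.lintegral_mul_le_Lp_mul_Lq μ (.conjExponent hp)
          (measurable_Afun μ q α hf).aemeasurable (measurable_Afun μ q' α hg).aemeasurable
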